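/- arXiv:1404.7731 — 2 statements merged into one kernel-verified Lean document; each statement's English description precedes it below -/
import Mathlib

section
/- Let d, r, n be positive integers with d ≥ 2. If for every positive integer j the inequality C(jd + r - 1, r) ≤ n · C(j + r - 1, r) holds (where C denotes the binomial coefficient), then n ≥ d^r. -/
/-!
Since `r! * C(m + r - 1, r) = m (m + 1) ⋯ (m + r - 1)`, the hypothesis says that
`∏_{i < r} (j d + i) / (j + i) ≤ n` for every `j ≥ 1`. Each factor tends to `d` as `j → ∞`,
so the product tends to `d ^ r`, which is therefore at most `n`.
-/

open Finset Filter Topology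

theorem Nat.prod_range_add_le_of_choose_le {a b r n : ℕ}
    (h : (a + r - 1).choose r ≤ n * (b + r - 1).choose r) :
    ∏ i ∈ range r, (a + i) ≤ n * ∏ i ∈ range r, (b + i) := by
  rw [← Nat.ascFactorial_eq_prod_range, ← Nat.ascFactorial_eq_prod_range,
    Nat.ascFactorial_eq_factorial_mul_choose', Nat.ascFactorial_eq_factorial_mul_choose',
    mul_left_comm]
  exact Nat.mul_le_mul_left _ h

theorem tendsto_natCast_mul_add_div_add (d c : ℝ) :
    Tendsto (fun j : ℕ => ((j : ℝ) * d + c) / (j + c)) atTop (𝓝 d) := by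
  have hlim : Tendsto (fun j : ℕ => (d + c / j) / (1 + c / j)) atTop (𝓝 ((d + 0) / (1 + 0))) :=
    ((tendsto_const_div_atTop_nhds_zero_nat c).const_add d).div
      ((tendsto_const_div_atTop_nhds_zero_nat c).const_add 1) (by norm_num)
  rw [add_zero, add_zero, div_one] at hlim
  refine hlim.congr' ?_
  filter_upwards [eventually_ne_atTop 0] with j hj
  have hj' : (j : ℝ) ≠ 0 := Nat.cast_ne_zero.mpr hj
  rw [← mul_div_mul_left _ _ hj', mul_add, mul_add, mul_div_cancel₀ _ hj', mul_one, mul_comm]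

theorem tendsto_prod_range_natCast_mul_add_div_add (d : ℝ) (r : ℕ) :
    Tendsto (fun j : ℕ => ∏ i ∈ range r, ((j : ℝ) * d + i) / (j + i)) atTop (𝓝 (d ^ r)) := by
  simpa using tendsto_finsetProd (range r) fun i _ => tendsto_natCast_mul_add_div_add d i

theorem binomial_growth_forces_power_bound_general (d r n : ℕ)
    (h : ∀ j : ℕ, 1 ≤ j → Nat.choose (j * d + r - 1) r ≤ n * Nat.choose (j + r - 1) r) :
    d ^ r ≤ n := by
  have hbound : ∀ᶠ j : ℕ in atTop, ∏ i ∈ range r, ((j : ℝ) * d + i) / (j + i) ≤ n := by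
    filter_upwards [eventually_ge_atTop 1] with j hj
    have hpos : 0 < ∏ i ∈ range r, ((j : ℝ) + i) :=
      prod_pos fun i _ => by positivity
    rw [prod_div_distrib, div_le_iff₀ hpos]
    exact_mod_cast Nat.prod_range_add_le_of_choose_le (h j hj)
  exact_mod_cast le_of_tendsto (tendsto_prod_range_natCast_mul_add_div_add d r) hbound

/-- Let `d, r, n` be positive integers with `d ≥ 2`. If for every positive integer `j`
we have `C(jd + r - 1, r) ≤ n · C(j + r - 1, r)`, then `n ≥ d^r`. -/
theorem binomial_growth_forces_power_bound (d r n : ℕ) (hd : 2 ≤ d) (hr : 1 ≤ r) (hn : 1 ≤ n)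
    (h : ∀ j : ℕ, 1 ≤ j → Nat.choose (j * d + r - 1) r ≤ n * Nat.choose (j + r - 1) r) :
    d ^ r ≤ n :=
  binomial_growth_forces_power_bound_general d r n h
end

section
/- Let m, n be positive integers, a₁,...,a_n nonnegative integers not all zero, and ν₁,...,ν_n ∈ {0,1,...,m} with ∑_{i=1}^n a_i ν_i ≥ m. Then ∑_{i=1}^n ν_i(ν_i + 1) ≥ m(m+1)/(∑_{i=1}^n a_i²). Moreover, if ν_i = a_i·ℓ for a positive integer ℓ and m = ℓ·∑_i a_i², then ∑_i ν_i(ν_i+1) - m(m+1)/(∑_i a_i²) = ℓ·(∑_i a_i - 1). -/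
/-!
Write `S = ∑ aᵢ²` and `T = ∑ aᵢ νᵢ ≥ m`. Cauchy–Schwarz gives `m² ≤ T² ≤ S ∑ νᵢ²`, and since
`aᵢ ≤ aᵢ²` and `νᵢ ≤ ∑ νⱼ` for natural numbers, also `m ≤ T ≤ S ∑ νᵢ`. Adding the two yields
`m(m+1) ≤ S ∑ νᵢ(νᵢ+1)`.
-/

open Finset

variable {ι : Type*}

theorem Nat.sum_mul_le_sum_sq_mul_sum (s : Finset ι) (a ν : ι → ℕ) :
    ∑ i ∈ s, a i * ν i ≤ (∑ i ∈ s, a i ^ 2) * ∑ i ∈ s, ν i := by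
  rw [sum_mul]
  refine sum_le_sum fun i hi => Nat.mul_le_mul ?_ (single_le_sum (fun _ _ => Nat.zero_le _) hi)
  exact Nat.le_self_pow two_ne_zero (a i)

theorem Nat.mul_succ_le_sum_sq_mul_sum_mul_succ (s : Finset ι) (a ν : ι → ℕ) {m : ℕ}
    (hm : m ≤ ∑ i ∈ s, a i * ν i) :
    m * (m + 1) ≤ (∑ i ∈ s, a i ^ 2) * ∑ i ∈ s, ν i * (ν i + 1) := by
  have hsq : m ^ 2 ≤ (∑ i ∈ s, a i ^ 2) * ∑ i ∈ s, ν i ^ 2 :=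
    (Nat.pow_le_pow_left hm 2).trans (sum_mul_sq_le_sq_mul_sq s a ν)
  have hlin := hm.trans (sum_mul_le_sum_sq_mul_sum s a ν)
  have hsplit : ∑ i ∈ s, ν i * (ν i + 1) = ∑ i ∈ s, ν i ^ 2 + ∑ i ∈ s, ν i := by
    rw [← sum_add_distrib]
    exact sum_congr rfl fun i _ => by ring
  rw [hsplit, mul_add]
  nlinarith

theorem sum_mul_add_one_sub_eq {K : Type*} [Field K] (s : Finset ι) (a : ι → K) (ℓ : K)
    (hS : ∑ i ∈ s, a i ^ 2 ≠ 0) :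
    ∑ i ∈ s, a i * ℓ * (a i * ℓ + 1) -
        ℓ * (∑ i ∈ s, a i ^ 2) * (ℓ * (∑ i ∈ s, a i ^ 2) + 1) / ∑ i ∈ s, a i ^ 2 =
      ℓ * (∑ i ∈ s, a i - 1) := by
  have hsum : ∑ i ∈ s, a i * ℓ * (a i * ℓ + 1) = ℓ ^ 2 * ∑ i ∈ s, a i ^ 2 + ℓ * ∑ i ∈ s, a i := by
    rw [mul_sum, mul_sum, ← sum_add_distrib]
    exact sum_congr rfl fun i _ => by ring
  rw [hsum]
  field_simp
  ring

theorem sum_nu_bound_general (m n : ℕ) (a ν : Fin n → ℕ)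
    (ha : ∃ i, a i ≠ 0) (hs : m ≤ ∑ i, a i * ν i) :
    ((m * (m + 1) : ℚ) / (∑ i, (a i : ℚ) ^ 2) ≤ ∑ i, (ν i : ℚ) * (ν i + 1)) ∧
    (∀ ℓ : ℕ, 1 ≤ ℓ → (∀ i, ν i = a i * ℓ) → m = ℓ * ∑ i, a i ^ 2 →
      (∑ i, (ν i : ℚ) * (ν i + 1)) - (m * (m + 1) : ℚ) / (∑ i, (a i : ℚ) ^ 2) =
        ℓ * ((∑ i, (a i : ℚ)) - 1)) := by
  refine ⟨div_le_of_le_mul₀ (by positivity) (by positivity) ?_, fun ℓ _ hνa hmS => ?_⟩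
  · rw [mul_comm (∑ i, (ν i : ℚ) * _)]
    exact_mod_cast Nat.mul_succ_le_sum_sq_mul_sum_mul_succ univ a ν hs
  · obtain ⟨j, hj⟩ := ha
    have hS : ∑ i, (a i : ℚ) ^ 2 ≠ 0 :=
      (sum_pos' (fun i _ => by positivity) ⟨j, mem_univ j, by positivity⟩).ne'
    simp only [hνa, hmS, Nat.cast_mul, Nat.cast_sum, Nat.cast_pow]
    exact sum_mul_add_one_sub_eq univ (fun i => (a i : ℚ)) ℓ hS

/-- Let `m, n` be positive integers, `a₁,...,a_n` nonnegative integers not all zero, and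
`ν₁,...,ν_n ∈ {0,...,m}` with `∑ a_i ν_i ≥ m`. Then
`∑ ν_i (ν_i + 1) ≥ m(m+1) / (∑ a_i²)` (in `ℚ`). Moreover, if `ν_i = a_i·ℓ` for a positive
integer `ℓ` and `m = ℓ·∑ a_i²`, then
`∑ ν_i(ν_i+1) - m(m+1)/(∑ a_i²) = ℓ·(∑ a_i - 1)`. -/
theorem sum_nu_bound (m n : ℕ) (hm : 1 ≤ m) (hn : 1 ≤ n) (a ν : Fin n → ℕ)
    (ha : ∃ i, a i ≠ 0) (hν : ∀ i, ν i ≤ m) (hs : m ≤ ∑ i, a i * ν i) :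
    ((m * (m + 1) : ℚ) / (∑ i, (a i : ℚ) ^ 2) ≤ ∑ i, (ν i : ℚ) * (ν i + 1)) ∧
    (∀ ℓ : ℕ, 1 ≤ ℓ → (∀ i, ν i = a i * ℓ) → m = ℓ * ∑ i, a i ^ 2 →
      (∑ i, (ν i : ℚ) * (ν i + 1)) - (m * (m + 1) : ℚ) / (∑ i, (a i : ℚ) ^ 2) =
        ℓ * ((∑ i, (a i : ℚ)) - 1)) :=
  sum_nu_bound_general m n a ν ha hs
end
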